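/- Suppose the discount function satisfies δ(i)δ(j) ≤ δ(i+j) for all i,j ∈ ℕ. If S* := ∩_{S∈ℰ} S is an equilibrium, then S* is optimal, i.e. V(x,S*) ≥ V(x,S) for every S ∈ ℰ and every x ∈ 𝕏. -/

import Mathlib

open MeasureTheory ProbabilityTheory Set Filter Topology
open scoped ENNReal ENat

noncomputable section

/-- The σ-algebra generated by the first `n+1` coordinates of the path space:
the natural filtration of the coordinate process at time `n`. -/
def pathSigma (𝕏 : Type*) [m : MeasurableSpace 𝕏] (n : ℕ) : MeasurableSpace (ℕ → 𝕏) :=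
  ⨆ i ∈ Finset.range (n + 1), MeasurableSpace.comap (fun ω : ℕ → 𝕏 => ω i) m

/-- `Pr` is the family of laws of the time-homogeneous Markov chain with one-step
transition kernel `Q`: under `Pr x` the chain starts at `x`, and the Markov property
`Pr^x(X_{n+1} ∈ A | 𝓕_n) = Q(X_n, A)` holds. -/
structure IsMarkovChainLaw {𝕏 : Type*} [MeasurableSpace 𝕏]
    (Pr : Kernel 𝕏 (ℕ → 𝕏)) (Q : Kernel 𝕏 𝕏) : Prop where
  start : ∀ x : 𝕏, Pr x {ω | ω 0 = x} = 1
  markov : ∀ (x : 𝕏) (n : ℕ) (B : Set (ℕ → 𝕏)), MeasurableSet[pathSigma 𝕏 n] B →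
    ∀ A : Set 𝕏, MeasurableSet A →
      Pr x (B ∩ {ω | ω (n + 1) ∈ A}) = ∫⁻ ω in B, Q (ω n) A ∂(Pr x)

/-- The first hitting time `ρ(x,S) = inf {t ≥ 1 : X_t ∈ S}` along the path `ω`
(equal to `⊤` if `S` is never reached at a time `≥ 1`). -/
def hitTime {𝕏 : Type*} (S : Set 𝕏) (ω : ℕ → 𝕏) : ℕ∞ :=
  sInf {n : ℕ∞ | ∃ t : ℕ, n = (t : ℕ∞) ∧ 1 ≤ t ∧ ω t ∈ S}

/-- The discounted payoff `δ(ρ(x,S)) f(X_{ρ(x,S)})` collected along the path `ω`,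
with the convention that it vanishes when `S` is never hit. -/
def stopPayoff {𝕏 : Type*} (δ : ℕ → ℝ) (f : 𝕏 → ℝ) (S : Set 𝕏) (ω : ℕ → 𝕏) : ℝ :=
  if hitTime S ω = ⊤ then 0
  else δ (hitTime S ω).toNat * f (ω (hitTime S ω).toNat)

/-- The objective value `J(x, ρ(x,S)) = 𝔼^x[δ(ρ(x,S)) f(X_{ρ(x,S)})]`. -/
def valJ {𝕏 : Type*} [MeasurableSpace 𝕏] (Pr : Kernel 𝕏 (ℕ → 𝕏)) (δ : ℕ → ℝ) (f : 𝕏 → ℝ)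
    (S : Set 𝕏) (x : 𝕏) : ℝ :=
  ∫ ω, stopPayoff δ f S ω ∂(Pr x)

/-- The operator `Θ(S) = {x ∈ 𝕏 : f(x) ≥ J(x, ρ(x,S))}`. -/
def Θ {𝕏 : Type*} [MeasurableSpace 𝕏] (Pr : Kernel 𝕏 (ℕ → 𝕏)) (δ : ℕ → ℝ) (f : 𝕏 → ℝ)
    (S : Set 𝕏) : Set 𝕏 :=
  {x | valJ Pr δ f S x ≤ f x}

/-- A Borel set `S ⊆ 𝕏` is an equilibrium if `Θ(S) = S`. -/
def IsEquilibrium {𝕏 : Type*} [MeasurableSpace 𝕏] (Pr : Kernel 𝕏 (ℕ → 𝕏)) (δ : ℕ → ℝ)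
    (f : 𝕏 → ℝ) (S : Set 𝕏) : Prop :=
  MeasurableSet S ∧ Θ Pr δ f S = S

/-- The value `V(x,S) = max (f x) (J(x, ρ(x,S)))` associated with an equilibrium `S`. -/
def valV {𝕏 : Type*} [MeasurableSpace 𝕏] (Pr : Kernel 𝕏 (ℕ → 𝕏)) (δ : ℕ → ℝ) (f : 𝕏 → ℝ)
    (S : Set 𝕏) (x : 𝕏) : ℝ :=
  max (f x) (valJ Pr δ f S x)

/-!
Let `S' = ⋂ ℰ ⊆ S` and split `J(x, S)` according to the value `t` of `ρ(x, S)`. On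
`{ρ(x, S) = t, X_t ∈ S'}` the chain also enters `S'` first at time `t`. On `{ρ(x, S) = t, X_t ∉ S'}`
stopping is worse than continuing to `S'`, because `S'` is an equilibrium: `f(X_t) ≤ J(X_t, S')`.
By the Markov property at time `t`, `δ(t) J(X_t, S')` averages `δ(t) δ(ρ') f(X_{t+ρ'})` with
`t + ρ' = ρ(x, S')`, and decreasing impatience `δ(t) δ(ρ') ≤ δ(t + ρ')` bounds it by the payoff of
`S'`. Summing over `t` gives `J(x, S) ≤ J(x, S')`.
-/

section HittingTime

variable {𝕏 : Type*} {S S' : Set 𝕏} {ω : ℕ → 𝕏}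

def pathShift (t : ℕ) (ω : ℕ → 𝕏) : ℕ → 𝕏 := fun s => ω (t + s)

lemma hitTime_eq_iInf : hitTime S ω = ⨅ t ∈ {t : ℕ | 1 ≤ t ∧ ω t ∈ S}, (t : ℕ∞) := by
  rw [hitTime, ← sInf_image]; congr 1; ext n; simp [eq_comm, and_comm]

lemma hitTime_eq_coe_iff {t : ℕ} :
    hitTime S ω = t ↔ 1 ≤ t ∧ ω t ∈ S ∧ ∀ s : ℕ, 1 ≤ s → s < t → ω s ∉ S := by
  rw [hitTime_eq_iInf]
  set T := {t : ℕ | 1 ≤ t ∧ ω t ∈ S}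
  constructor
  · intro h
    have hne : T.Nonempty := by
      by_contra hT
      rw [Set.not_nonempty_iff_eq_empty.1 hT] at h
      simp at h
    rw [← ENat.natCast_sInf hne, Nat.cast_inj] at h
    subst h
    exact ⟨(Nat.sInf_mem hne).1, (Nat.sInf_mem hne).2,
      fun s h1 hs hmem => Nat.notMem_of_lt_sInf hs ⟨h1, hmem⟩⟩
  · rintro ⟨h1, hmem, hmin⟩
    have hleast : IsLeast T t :=
      ⟨⟨h1, hmem⟩, fun s ⟨h1s, hs⟩ => not_lt.1 fun hst => hmin s h1s hst hs⟩
    rw [← ENat.natCast_sInf ⟨t, hleast.1⟩, hleast.csInf_eq]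

lemma hitTime_eq_of_subset (hsub : S' ⊆ S) {t : ℕ} (ht : hitTime S ω = t) (hmem : ω t ∈ S') :
    hitTime S' ω = t := by
  obtain ⟨h1, -, hmin⟩ := hitTime_eq_coe_iff.1 ht
  exact hitTime_eq_coe_iff.2 ⟨h1, hmem, fun s h1s hst hs => hmin s h1s hst (hsub hs)⟩

lemma hitTime_eq_add_of_pathShift {t u : ℕ} (hno : ∀ s : ℕ, 1 ≤ s → s ≤ t → ω s ∉ S)
    (hu : hitTime S (pathShift t ω) = u) : hitTime S ω = ↑(t + u) := by
  obtain ⟨h1, hmem, hmin⟩ := hitTime_eq_coe_iff.1 hu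
  refine hitTime_eq_coe_iff.2 ⟨by omega, hmem, fun s h1s hs => ?_⟩
  rcases le_or_gt s t with hst | hst
  · exact hno s h1s hst
  · simpa [pathShift, Nat.add_sub_cancel' hst.le] using hmin (s - t) (by omega) (by omega)

end HittingTime

section Payoff

variable {𝕏 : Type*} {δ : ℕ → ℝ} {f : 𝕏 → ℝ} {S : Set 𝕏} {ω : ℕ → 𝕏}

lemma stopPayoff_of_hitTime_eq_top (h : hitTime S ω = ⊤) : stopPayoff δ f S ω = 0 := by
  rw [stopPayoff, if_pos h]

lemma stopPayoff_of_hitTime_eq {t : ℕ} (h : hitTime S ω = t) :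
    stopPayoff δ f S ω = δ t * f (ω t) := by
  rw [stopPayoff, h, if_neg (ENat.natCast_ne_top t), ENat.toNat_natCast]

lemma stopPayoff_nonneg (hδ : ∀ k, 0 ≤ δ k) (hf : ∀ y, 0 ≤ f y) : 0 ≤ stopPayoff δ f S ω := by
  unfold stopPayoff; split_ifs
  exacts [le_rfl, mul_nonneg (hδ _) (hf _)]

lemma stopPayoff_le (hδ : ∀ k, δ k ∈ Icc (0 : ℝ) 1) (hf : ∀ y, 0 ≤ f y) {C : ℝ}
    (hfC : ∀ y, f y ≤ C) : stopPayoff δ f S ω ≤ C := by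
  unfold stopPayoff; split_ifs
  -- `0 ≤ C`, as `𝕏` is inhabited by `ω 0`
  · exact (hf (ω 0)).trans (hfC _)
  · exact (mul_le_of_le_one_left (hf _) (hδ _).2).trans (hfC _)

lemma ofReal_stopPayoff_eq_tsum (δ : ℕ → ℝ) (f : 𝕏 → ℝ) (S : Set 𝕏) (ω : ℕ → 𝕏) :
    ENNReal.ofReal (stopPayoff δ f S ω) =
      ∑' t : ℕ, {ω | hitTime S ω = t}.indicator (fun ω => ENNReal.ofReal (δ t * f (ω t))) ω := by
  cases hu : hitTime S ω using ENat.recTopCoe with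
  | top => simp [stopPayoff_of_hitTime_eq_top hu, hu]
  | coe u =>
    rw [stopPayoff_of_hitTime_eq hu, tsum_eq_single u (fun t ht => by simp [hu, Ne.symm ht])]
    simp [hu]

lemma mul_stopPayoff_pathShift_le (hδ : ∀ k, 0 ≤ δ k) (hDI : ∀ i j, δ i * δ j ≤ δ (i + j))
    (hf : ∀ y, 0 ≤ f y) {t : ℕ} (hno : ∀ s : ℕ, 1 ≤ s → s ≤ t → ω s ∉ S) :
    δ t * stopPayoff δ f S (pathShift t ω) ≤ stopPayoff δ f S ω := by
  cases hu : hitTime S (pathShift t ω) using ENat.recTopCoe with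
  | top =>
    rw [stopPayoff_of_hitTime_eq_top hu, mul_zero]
    exact stopPayoff_nonneg hδ hf
  | coe u =>
    rw [stopPayoff_of_hitTime_eq hu, stopPayoff_of_hitTime_eq (hitTime_eq_add_of_pathShift hno hu),
      ← mul_assoc]
    exact mul_le_mul_of_nonneg_right (hDI t u) (hf _)

end Payoff

section Measurability

variable {𝕏 : Type*} [MeasurableSpace 𝕏]

lemma pathSigma_le (n : ℕ) : pathSigma 𝕏 n ≤ MeasurableSpace.pi :=
  iSup₂_le fun i _ => (measurable_pi_apply i).comap_le

lemma measurable_eval_pathSigma {i n : ℕ} (h : i ≤ n) :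
    Measurable[pathSigma 𝕏 n] (fun ω : ℕ → 𝕏 => ω i) := by
  rw [measurable_iff_comap_le]
  exact le_iSup_of_le i (le_iSup_of_le (by simpa [Nat.lt_succ_iff] using h) le_rfl)

lemma pathSigma_mono {m n : ℕ} (h : m ≤ n) : pathSigma 𝕏 m ≤ pathSigma 𝕏 n :=
  iSup₂_le fun _ hi => (measurable_eval_pathSigma
    ((Nat.lt_succ_iff.1 (Finset.mem_range.1 hi)).trans h)).comap_le

lemma measurable_pathShift (t : ℕ) : Measurable (pathShift (𝕏 := 𝕏) t) :=
  measurable_pi_lambda _ fun s => measurable_pi_apply (t + s)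

lemma measurableSet_hitTime_eq {S : Set 𝕏} (hS : MeasurableSet S) (t : ℕ) :
    MeasurableSet[pathSigma 𝕏 t] {ω : ℕ → 𝕏 | hitTime S ω = t} := by
  have hset : {ω : ℕ → 𝕏 | hitTime S ω = t} = {_ω | 1 ≤ t} ∩ {ω | ω t ∈ S} ∩
      ⋂ (s : ℕ) (_ : 1 ≤ s) (_ : s < t), {ω | ω s ∈ Sᶜ} := by
    ext ω; simp [hitTime_eq_coe_iff, and_assoc]
  rw [hset]
  refine (MeasurableSet.const _).inter (measurable_eval_pathSigma le_rfl hS) |>.inter ?_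
  exact .iInter fun s => .iInter fun _ => .iInter fun hst =>
    measurable_eval_pathSigma hst.le hS.compl

variable {δ : ℕ → ℝ} {f : 𝕏 → ℝ} {S : Set 𝕏}

lemma measurable_ofReal_stopPayoff (hf : Measurable f) (hS : MeasurableSet S) :
    Measurable fun ω => ENNReal.ofReal (stopPayoff δ f S ω) := by
  simp_rw [ofReal_stopPayoff_eq_tsum]
  exact .tsum fun t => Measurable.indicator (by fun_prop)
    (pathSigma_le t _ (measurableSet_hitTime_eq hS t))

lemma measurable_stopPayoff (hδ : ∀ k, 0 ≤ δ k) (hf_nonneg : ∀ y, 0 ≤ f y) (hf : Measurable f)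
    (hS : MeasurableSet S) : Measurable (stopPayoff δ f S) := by
  have h := (measurable_ofReal_stopPayoff (δ := δ) hf hS).ennreal_toReal
  simpa only [ENNReal.toReal_ofReal (stopPayoff_nonneg hδ hf_nonneg)] using h

lemma ofReal_valJ {Pr : Kernel 𝕏 (ℕ → 𝕏)} [IsMarkovKernel Pr] (hδ : ∀ k, δ k ∈ Icc (0 : ℝ) 1)
    (hf : Measurable f) (hf_nonneg : ∀ y, 0 ≤ f y) {C : ℝ} (hfC : ∀ y, f y ≤ C)
    (hS : MeasurableSet S) (x : 𝕏) :
    ENNReal.ofReal (valJ Pr δ f S x) = ∫⁻ ω, ENNReal.ofReal (stopPayoff δ f S ω) ∂(Pr x) := by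
  have hnonneg : ∀ ω, 0 ≤ stopPayoff δ f S ω := fun _ =>
    stopPayoff_nonneg (fun k => (hδ k).1) hf_nonneg
  refine ofReal_integral_eq_lintegral_ofReal ?_ (.of_forall hnonneg)
  refine .of_bound (measurable_stopPayoff (fun k => (hδ k).1) hf_nonneg hf hS).aestronglyMeasurable
    C (.of_forall fun ω => ?_)
  rw [Real.norm_of_nonneg (hnonneg ω)]
  exact stopPayoff_le hδ hf_nonneg hfC

end Measurability

section MarkovProperty

variable {𝕏 : Type*}

lemma indicator_pi_eq_prod_range {J : Finset ℕ} {N : ℕ} (hJ : ∀ j ∈ J, j ≤ N) (A : ℕ → Set 𝕏)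
    (w : ℕ → 𝕏) : ((J : Set ℕ).pi A).indicator (1 : (ℕ → 𝕏) → ℝ≥0∞) w =
      ∏ i ∈ Finset.range (N + 1), (if i ∈ J then (A i).indicator 1 else 1) (w i) := by
  rw [Set.indicator_pi_one_apply]
  refine (Finset.prod_congr rfl fun i hi => by rw [if_pos hi]).trans
    (Finset.prod_subset (fun j hj => Finset.mem_range.2 (Nat.lt_succ_of_le (hJ j hj)))
      fun i _ hi => by rw [if_neg hi]; rfl)

lemma setLIntegral_eq_lintegral_indicator_one_mul {α : Type*} [MeasurableSpace α]
    {μ : Measure α} {B : Set α} (hB : MeasurableSet B) (F : α → ℝ≥0∞) :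
    ∫⁻ a in B, F a ∂μ = ∫⁻ a, B.indicator 1 a * F a ∂μ := by
  rw [← lintegral_indicator hB]
  exact lintegral_congr fun a => by by_cases ha : a ∈ B <;> simp [ha]

variable [MeasurableSpace 𝕏]

def foldLast (Q : Kernel 𝕏 𝕏) (h : ℕ → 𝕏 → ℝ≥0∞) (n : ℕ) : ℕ → 𝕏 → ℝ≥0∞ :=
  Function.update h n fun y => h n y * ∫⁻ z, h (n + 1) z ∂(Q y)

lemma prod_range_succ_foldLast (Q : Kernel 𝕏 𝕏) (h : ℕ → 𝕏 → ℝ≥0∞) (n : ℕ) (w : ℕ → 𝕏) :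
    ∏ i ∈ Finset.range (n + 1), foldLast Q h n i (w i) =
      (∏ i ∈ Finset.range (n + 1), h i (w i)) * ∫⁻ z, h (n + 1) z ∂(Q (w n)) := by
  rw [Finset.prod_range_succ, Finset.prod_range_succ, foldLast, Function.update_self, ← mul_assoc]
  congr 2
  exact Finset.prod_congr rfl fun i hi =>
    by rw [Function.update_of_ne (Finset.mem_range.1 hi).ne]

lemma measurable_foldLast {Q : Kernel 𝕏 𝕏} {h : ℕ → 𝕏 → ℝ≥0∞} (hh : ∀ i, Measurable (h i))
    (n i : ℕ) : Measurable (foldLast Q h n i) := by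
  unfold foldLast
  rcases eq_or_ne i n with rfl | hi
  · rw [Function.update_self]; exact (hh i).mul (hh (i + 1)).lintegral_kernel
  · rw [Function.update_of_ne hi]; exact hh i

namespace IsMarkovChainLaw

variable {Pr : Kernel 𝕏 (ℕ → 𝕏)} {Q : Kernel 𝕏 𝕏}

lemma setLIntegral_comp_succ (hchain : IsMarkovChainLaw Pr Q) (m : ℕ) {B : Set (ℕ → 𝕏)}
    (hB : MeasurableSet[pathSigma 𝕏 m] B) {φ : 𝕏 → ℝ≥0∞} (hφ : Measurable φ) (x : 𝕏) :
    ∫⁻ ω in B, φ (ω (m + 1)) ∂(Pr x) = ∫⁻ ω in B, ∫⁻ z, φ z ∂(Q (ω m)) ∂(Pr x) := by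
  have hQ : Measurable fun ω : ℕ → 𝕏 => Q (ω m) := Q.measurable.comp (measurable_pi_apply m)
  have hlaw : ((Pr x).restrict B).map (fun ω => ω (m + 1)) =
      ((Pr x).restrict B).bind fun ω => Q (ω m) := by
    ext A hA
    rw [Measure.map_apply (measurable_pi_apply _) hA,
      Measure.restrict_apply (measurable_pi_apply _ hA), Set.inter_comm,
      Measure.bind_apply hA hQ.aemeasurable]
    exact hchain.markov x m B hB A hA
  rw [← lintegral_map hφ (measurable_pi_apply _), hlaw,
    Measure.lintegral_bind hQ.aemeasurable hφ.aemeasurable]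

lemma lintegral_mul_comp_succ (hchain : IsMarkovChainLaw Pr Q) (m : ℕ) {Ψ : (ℕ → 𝕏) → ℝ≥0∞}
    (hΨ : Measurable[pathSigma 𝕏 m] Ψ) {φ : 𝕏 → ℝ≥0∞} (hφ : Measurable φ) (x : 𝕏) :
    ∫⁻ ω, Ψ ω * φ (ω (m + 1)) ∂(Pr x) = ∫⁻ ω, Ψ ω * ∫⁻ z, φ z ∂(Q (ω m)) ∂(Pr x) := by
  have hle := pathSigma_le (𝕏 := 𝕏) m
  have hφ' : Measurable fun ω : ℕ → 𝕏 => φ (ω (m + 1)) := hφ.comp (measurable_pi_apply _)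
  have hQφ : Measurable fun ω : ℕ → 𝕏 => ∫⁻ z, φ z ∂(Q (ω m)) :=
    hφ.lintegral_kernel.comp (measurable_pi_apply m)
  -- both sides integrate `Ψ` against a density, and the two densities agree on `𝓕_m`
  have htrim : ((Pr x).withDensity fun ω => φ (ω (m + 1))).trim hle =
      ((Pr x).withDensity fun ω => ∫⁻ z, φ z ∂(Q (ω m))).trim hle := by
    refine @Measure.ext _ (pathSigma 𝕏 m) _ _ fun B hB => ?_
    rw [trim_measurableSet_eq hle hB, trim_measurableSet_eq hle hB,
      withDensity_apply _ (hle _ hB), withDensity_apply _ (hle _ hB)]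
    exact hchain.setLIntegral_comp_succ m hB hφ x
  have key := congr_arg (fun μ => ∫⁻ ω, Ψ ω ∂μ) htrim
  simp only [lintegral_trim hle hΨ] at key
  rw [lintegral_withDensity_eq_lintegral_mul _ hφ' (hΨ.mono hle le_rfl),
    lintegral_withDensity_eq_lintegral_mul _ hQφ (hΨ.mono hle le_rfl)] at key
  simpa only [Pi.mul_apply, mul_comm] using key

lemma lintegral_comp_zero [IsMarkovKernel Pr] (hchain : IsMarkovChainLaw Pr Q) (x : 𝕏)
    {φ : 𝕏 → ℝ≥0∞} (hφ : Measurable φ) : ∫⁻ ω, φ (ω 0) ∂(Pr x) = φ x := by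
  have hset : MeasurableSet {ω : ℕ → 𝕏 | φ (ω 0) = φ x} :=
    measurableSet_eq_fun (hφ.comp (measurable_pi_apply 0)) measurable_const
  -- `{ω | ω 0 = x}` need not be measurable, but it lies in this measurable set
  have hae : ∀ᵐ ω ∂(Pr x), φ (ω 0) = φ x := by
    refine (prob_compl_eq_zero_iff hset).2 (le_antisymm prob_le_one ?_)
    exact hchain.start x ▸ measure_mono fun ω (hω : ω 0 = x) => by simp [hω]
  rw [lintegral_congr_ae hae, lintegral_const, measure_univ, mul_one]

lemma lintegral_mul_prod_range_succ (hchain : IsMarkovChainLaw Pr Q) (n t : ℕ)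
    {Ψ : (ℕ → 𝕏) → ℝ≥0∞} (hΨ : Measurable[pathSigma 𝕏 (t + n)] Ψ) {h : ℕ → 𝕏 → ℝ≥0∞}
    (hh : ∀ i, Measurable (h i)) (x : 𝕏) :
    ∫⁻ ω, Ψ ω * ∏ i ∈ Finset.range (n + 2), h i (ω (t + i)) ∂(Pr x) =
      ∫⁻ ω, Ψ ω * ∏ i ∈ Finset.range (n + 1), foldLast Q h n i (ω (t + i)) ∂(Pr x) := by
  have hΨ' : Measurable[pathSigma 𝕏 (t + n)]
      fun ω => Ψ ω * ∏ i ∈ Finset.range (n + 1), h i (ω (t + i)) :=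
    hΨ.mul (Finset.measurable_prod _ fun i hi => (hh i).comp (measurable_eval_pathSigma
      (by have := Finset.mem_range.1 hi; omega)))
  calc ∫⁻ ω, Ψ ω * ∏ i ∈ Finset.range (n + 2), h i (ω (t + i)) ∂(Pr x)
      = ∫⁻ ω, (Ψ ω * ∏ i ∈ Finset.range (n + 1), h i (ω (t + i))) *
          h (n + 1) (ω (t + n + 1)) ∂(Pr x) := by
        simp only [Finset.prod_range_succ _ (n + 1), mul_assoc, add_assoc]
    _ = ∫⁻ ω, (Ψ ω * ∏ i ∈ Finset.range (n + 1), h i (ω (t + i))) *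
          ∫⁻ z, h (n + 1) z ∂(Q (ω (t + n))) ∂(Pr x) :=
        hchain.lintegral_mul_comp_succ (t + n) hΨ' (hh (n + 1)) x
    _ = _ := lintegral_congr fun ω => by
        rw [prod_range_succ_foldLast Q h n fun i => ω (t + i), mul_assoc]

lemma lintegral_mul_prod_range [IsMarkovKernel Pr] (hchain : IsMarkovChainLaw Pr Q) (n t : ℕ)
    {Ψ : (ℕ → 𝕏) → ℝ≥0∞} (hΨ : Measurable[pathSigma 𝕏 t] Ψ) {h : ℕ → 𝕏 → ℝ≥0∞}
    (hh : ∀ i, Measurable (h i)) (x : 𝕏) :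
    ∫⁻ ω, Ψ ω * ∏ i ∈ Finset.range (n + 1), h i (ω (t + i)) ∂(Pr x) =
      ∫⁻ ω, Ψ ω * ∫⁻ ω', ∏ i ∈ Finset.range (n + 1), h i (ω' i) ∂(Pr (ω t)) ∂(Pr x) := by
  induction n generalizing h with
  | zero =>
    simp only [zero_add, Finset.prod_range_one, add_zero, hchain.lintegral_comp_zero _ (hh 0)]
  | succ n ih =>
    have hfold : ∀ y, ∫⁻ ω', ∏ i ∈ Finset.range (n + 2), h i (ω' i) ∂(Pr y) =
        ∫⁻ ω', ∏ i ∈ Finset.range (n + 1), foldLast Q h n i (ω' i) ∂(Pr y) := fun y => by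
      simpa only [Pi.one_apply, one_mul, zero_add] using
        hchain.lintegral_mul_prod_range_succ n 0 (Ψ := 1) measurable_const hh y
    simp only [hfold]
    rw [hchain.lintegral_mul_prod_range_succ n t (hΨ.mono (pathSigma_mono le_self_add) le_rfl) hh,
      ih (measurable_foldLast hh n)]

lemma map_pathShift_restrict [IsMarkovKernel Pr] (hchain : IsMarkovChainLaw Pr Q) (t : ℕ)
    {B : Set (ℕ → 𝕏)} (hB : MeasurableSet[pathSigma 𝕏 t] B) (x : 𝕏) :
    ((Pr x).restrict B).map (pathShift t) = ((Pr x).restrict B).bind fun ω => Pr (ω t) := by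
  have hB' : MeasurableSet B := pathSigma_le t _ hB
  have hPr : Measurable fun ω : ℕ → 𝕏 => Pr (ω t) := Pr.measurable.comp (measurable_pi_apply t)
  have hB1 : Measurable[pathSigma 𝕏 t] (B.indicator (1 : (ℕ → 𝕏) → ℝ≥0∞)) :=
    (@measurable_const ℝ≥0∞ _ _ (pathSigma 𝕏 t) 1).indicator hB
  have hcyl : ∀ C ∈ squareCylinders fun _ : ℕ => {s : Set 𝕏 | MeasurableSet s},
      ((Pr x).restrict B).map (pathShift t) C = ((Pr x).restrict B).bind (fun ω => Pr (ω t)) C := by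
    rintro _ ⟨J, A, hA, rfl⟩
    have hA' : ∀ i, MeasurableSet (A i) := fun i => hA i (Set.mem_univ i)
    have hC : MeasurableSet ((J : Set ℕ).pi A) := .pi J.countable_toSet fun i _ => hA' i
    set h : ℕ → 𝕏 → ℝ≥0∞ := fun i => if i ∈ J then (A i).indicator 1 else 1
    have hh : ∀ i, Measurable (h i) := fun i => by
      simp only [h]; split_ifs
      exacts [measurable_one.indicator (hA' i), measurable_one]
    have hJ : ∀ j ∈ J, j ≤ J.sup id := fun j hj => Finset.le_sup (f := id) hj
    rw [← lintegral_indicator_one hC, lintegral_map (measurable_one.indicator hC)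
      (measurable_pathShift t), ← lintegral_indicator_one hC,
      Measure.lintegral_bind hPr.aemeasurable (measurable_one.indicator hC).aemeasurable,
      setLIntegral_eq_lintegral_indicator_one_mul hB',
      setLIntegral_eq_lintegral_indicator_one_mul hB']
    simp only [indicator_pi_eq_prod_range hJ]
    exact hchain.lintegral_mul_prod_range _ t hB1 hh x
  exact ext_of_generate_finite _ generateFrom_squareCylinders.symm
    (isPiSystem_squareCylinders (fun _ => MeasurableSpace.isPiSystem_measurableSet) fun _ => .univ)
    hcyl (hcyl _ ⟨∅, fun _ => Set.univ, fun _ _ => .univ, by simp⟩)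

lemma setLIntegral_comp_pathShift [IsMarkovKernel Pr] (hchain : IsMarkovChainLaw Pr Q) (t : ℕ)
    {B : Set (ℕ → 𝕏)} (hB : MeasurableSet[pathSigma 𝕏 t] B) {g : (ℕ → 𝕏) → ℝ≥0∞}
    (hg : Measurable g) (x : 𝕏) :
    ∫⁻ ω in B, g (pathShift t ω) ∂(Pr x) = ∫⁻ ω in B, ∫⁻ ω', g ω' ∂(Pr (ω t)) ∂(Pr x) := by
  have hPr : Measurable fun ω : ℕ → 𝕏 => Pr (ω t) := Pr.measurable.comp (measurable_pi_apply t)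
  rw [← lintegral_map hg (measurable_pathShift t), hchain.map_pathShift_restrict t hB x,
    Measure.lintegral_bind hPr.aemeasurable hg.aemeasurable]

end IsMarkovChainLaw

end MarkovProperty

section Comparison

variable {𝕏 : Type*} [MeasurableSpace 𝕏] {δ : ℕ → ℝ} {f : 𝕏 → ℝ} {S S' : Set 𝕏}

lemma IsEquilibrium.le_valJ_of_notMem {Pr : Kernel 𝕏 (ℕ → 𝕏)} (h : IsEquilibrium Pr δ f S)
    {y : 𝕏} (hy : y ∉ S) : f y ≤ valJ Pr δ f S y := by
  rw [← h.2] at hy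
  exact (not_le.1 hy).le

lemma lintegral_ofReal_stopPayoff_eq_tsum (hf : Measurable f) (hS : MeasurableSet S)
    (μ : Measure (ℕ → 𝕏)) : ∫⁻ ω, ENNReal.ofReal (stopPayoff δ f S ω) ∂μ =
      ∑' t : ℕ, ∫⁻ ω in {ω | hitTime S ω = t}, ENNReal.ofReal (δ t * f (ω t)) ∂μ := by
  have hE := fun t : ℕ => pathSigma_le t _ (measurableSet_hitTime_eq hS t)
  simp_rw [ofReal_stopPayoff_eq_tsum]
  rw [lintegral_tsum fun t => (Measurable.indicator (by fun_prop) (hE t)).aemeasurable]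
  exact tsum_congr fun t => lintegral_indicator (hE t) _

lemma tsum_setLIntegral_hitTime_eq_le (hS : MeasurableSet S) (F : (ℕ → 𝕏) → ℝ≥0∞)
    (μ : Measure (ℕ → 𝕏)) : ∑' t : ℕ, ∫⁻ ω in {ω | hitTime S ω = t}, F ω ∂μ ≤ ∫⁻ ω, F ω ∂μ := by
  have hdisj : Pairwise (Function.onFun Disjoint fun t : ℕ => {ω | hitTime S ω = t}) :=
    fun i j hij => Set.disjoint_left.2 fun ω hi hj =>
      hij (Nat.cast_injective ((hi : hitTime S ω = i).symm.trans hj))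
  rw [← lintegral_iUnion (fun t => pathSigma_le t _ (measurableSet_hitTime_eq hS t)) hdisj]
  exact setLIntegral_le_lintegral _ _

variable {Pr : Kernel 𝕏 (ℕ → 𝕏)} [IsMarkovKernel Pr] {Q : Kernel 𝕏 𝕏} {C : ℝ}

lemma setLIntegral_hitTime_eq_le (hchain : IsMarkovChainLaw Pr Q) (hδ : ∀ k, δ k ∈ Icc (0 : ℝ) 1)
    (hDI : ∀ i j, δ i * δ j ≤ δ (i + j)) (hf : Measurable f) (hf_nonneg : ∀ y, 0 ≤ f y)
    (hfC : ∀ y, f y ≤ C) (hS : MeasurableSet S) (hS' : MeasurableSet S') (hsub : S' ⊆ S)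
    (hout : ∀ y ∉ S', f y ≤ valJ Pr δ f S' y) (x : 𝕏) (t : ℕ) :
    ∫⁻ ω in {ω | hitTime S ω = t}, ENNReal.ofReal (δ t * f (ω t)) ∂(Pr x) ≤
      ∫⁻ ω in {ω | hitTime S ω = t}, ENNReal.ofReal (stopPayoff δ f S' ω) ∂(Pr x) := by
  set E := {ω : ℕ → 𝕏 | hitTime S ω = t}
  set X := {ω : ℕ → 𝕏 | ω t ∈ S'}
  have hEX : MeasurableSet[pathSigma 𝕏 t] (E \ X) :=
    (measurableSet_hitTime_eq hS t).diff (measurable_eval_pathSigma le_rfl hS')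
  have hX : MeasurableSet X := measurable_pi_apply t hS'
  have hno : ∀ ω ∈ E \ X, ∀ s : ℕ, 1 ≤ s → s ≤ t → ω s ∉ S' := fun ω ⟨hω, hωt⟩ s h1s hst => by
    rcases hst.lt_or_eq with hst | rfl
    · exact fun hs => (hitTime_eq_coe_iff.1 hω).2.2 s h1s hst (hsub hs)
    · exact hωt
  rw [← lintegral_inter_add_sdiff _ E hX, ← lintegral_inter_add_sdiff _ E hX]
  gcongr ?_ + ?_
  · refine (setLIntegral_congr_fun (pathSigma_le t _ (measurableSet_hitTime_eq hS t) |>.inter hX)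
      fun ω ⟨hω, hωt⟩ => ?_).le
    rw [stopPayoff_of_hitTime_eq (hitTime_eq_of_subset hsub hω hωt)]
  calc ∫⁻ ω in E \ X, ENNReal.ofReal (δ t * f (ω t)) ∂(Pr x)
      ≤ ∫⁻ ω in E \ X, ENNReal.ofReal (δ t) *
          ∫⁻ ω', ENNReal.ofReal (stopPayoff δ f S' ω') ∂(Pr (ω t)) ∂(Pr x) := by
        refine setLIntegral_mono' (pathSigma_le t _ hEX) fun ω hω => ?_
        rw [ENNReal.ofReal_mul (hδ t).1, ← ofReal_valJ hδ hf hf_nonneg hfC hS']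
        gcongr
        exact hout _ hω.2
    _ = ENNReal.ofReal (δ t) *
          ∫⁻ ω in E \ X, ENNReal.ofReal (stopPayoff δ f S' (pathShift t ω)) ∂(Pr x) := by
        rw [lintegral_const_mul' _ _ ENNReal.ofReal_ne_top,
          hchain.setLIntegral_comp_pathShift t hEX (measurable_ofReal_stopPayoff hf hS') x]
    _ ≤ ∫⁻ ω in E \ X, ENNReal.ofReal (stopPayoff δ f S' ω) ∂(Pr x) := by
        rw [← lintegral_const_mul' _ _ ENNReal.ofReal_ne_top]
        refine setLIntegral_mono' (pathSigma_le t _ hEX) fun ω hω => ?_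
        rw [← ENNReal.ofReal_mul (hδ t).1]
        exact ENNReal.ofReal_le_ofReal
          (mul_stopPayoff_pathShift_le (fun k => (hδ k).1) hDI hf_nonneg (hno ω hω))

theorem valJ_le_of_subset (hchain : IsMarkovChainLaw Pr Q) (hδ : ∀ k, δ k ∈ Icc (0 : ℝ) 1)
    (hDI : ∀ i j, δ i * δ j ≤ δ (i + j)) (hf : Measurable f) (hf_nonneg : ∀ y, 0 ≤ f y)
    (hfC : ∀ y, f y ≤ C) (hS : MeasurableSet S) (hS' : MeasurableSet S') (hsub : S' ⊆ S)
    (hout : ∀ y ∉ S', f y ≤ valJ Pr δ f S' y) (x : 𝕏) :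
    valJ Pr δ f S x ≤ valJ Pr δ f S' x := by
  have hJ' : 0 ≤ valJ Pr δ f S' x :=
    integral_nonneg fun _ => stopPayoff_nonneg (fun k => (hδ k).1) hf_nonneg
  rw [← ENNReal.ofReal_le_ofReal_iff hJ', ofReal_valJ hδ hf hf_nonneg hfC hS,
    ofReal_valJ hδ hf hf_nonneg hfC hS', lintegral_ofReal_stopPayoff_eq_tsum hf hS]
  exact (ENNReal.tsum_le_tsum fun t => setLIntegral_hitTime_eq_le hchain hδ hDI hf hf_nonneg hfC
    hS hS' hsub hout x t).trans (tsum_setLIntegral_hitTime_eq_le hS _ _)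

end Comparison

theorem intersection_equilibrium_optimal_general
    {𝕏 : Type*} [MeasurableSpace 𝕏]
    (Pr : Kernel 𝕏 (ℕ → 𝕏)) [IsMarkovKernel Pr] (Q : Kernel 𝕏 𝕏)
    (hchain : IsMarkovChainLaw Pr Q)
    (f : 𝕏 → ℝ) (hf_meas : Measurable f) (hf_nonneg : ∀ x, 0 ≤ f x)
    (hf_bdd : ∃ C : ℝ, ∀ x, f x ≤ C)
    (δ : ℕ → ℝ) (hδ_mem : ∀ k, δ k ∈ Set.Icc (0 : ℝ) 1)
    (hDI : ∀ i j : ℕ, δ i * δ j ≤ δ (i + j))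
    (hstar : IsEquilibrium Pr δ f (⋂₀ {S : Set 𝕏 | IsEquilibrium Pr δ f S})) :
    ∀ S : Set 𝕏, IsEquilibrium Pr δ f S → ∀ x : 𝕏,
      valV Pr δ f S x ≤ valV Pr δ f (⋂₀ {S : Set 𝕏 | IsEquilibrium Pr δ f S}) x := by
  intro S hS x
  obtain ⟨C, hfC⟩ := hf_bdd
  exact max_le_max le_rfl (valJ_le_of_subset hchain hδ_mem hDI hf_meas hf_nonneg hfC hS.1 hstar.1
    (Set.sInter_subset_of_mem hS) (fun _ => hstar.le_valJ_of_notMem) x)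

/-- Under decreasing impatience, if `S* = ⋂_{S ∈ ℰ} S` is an equilibrium,
then it is optimal. -/
theorem intersection_equilibrium_optimal
    {𝕏 : Type*} [TopologicalSpace 𝕏] [PolishSpace 𝕏] [MeasurableSpace 𝕏] [BorelSpace 𝕏]
    (Pr : Kernel 𝕏 (ℕ → 𝕏)) [IsMarkovKernel Pr] (Q : Kernel 𝕏 𝕏) [IsMarkovKernel Q]
    (hchain : IsMarkovChainLaw Pr Q)
    (f : 𝕏 → ℝ) (hf_meas : Measurable f) (hf_nonneg : ∀ x, 0 ≤ f x)
    (hf_bdd : ∃ C : ℝ, ∀ x, f x ≤ C)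
    (δ : ℕ → ℝ) (hδ_mem : ∀ k, δ k ∈ Set.Icc (0 : ℝ) 1) (hδ_anti : StrictAnti δ)
    (hδ_zero : δ 0 = 1) (hδ_lim : Tendsto δ atTop (𝓝 0))
    (hDI : ∀ i j : ℕ, δ i * δ j ≤ δ (i + j))
    (hstar : IsEquilibrium Pr δ f (⋂₀ {S : Set 𝕏 | IsEquilibrium Pr δ f S})) :
    ∀ S : Set 𝕏, IsEquilibrium Pr δ f S → ∀ x : 𝕏,
      valV Pr δ f S x ≤ valV Pr δ f (⋂₀ {S : Set 𝕏 | IsEquilibrium Pr δ f S}) x :=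
  intersection_equilibrium_optimal_general Pr Q hchain f hf_meas hf_nonneg hf_bdd δ hδ_mem hDI hstar

end
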